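/- On a surface P with an elliptic fibration f_e over a rational base, suppose K_P ≡ Σ(m_i − 1)F_i with multiple fibres m_iF_i, and suppose an effective divisor B' satisfies B'·K_P = 2 and B'·F_i ≡ 0 (mod 2) for all i (where F_i is numerically 1/m_i of a general fibre F_e). Then K_P is numerically equivalent to ½F_e. -/

import Mathlib

/-!
Since `m_i • F_i = F_e`, the canonical class is the multiple `(Σ (1 - 1/m_i)) • F_e` of the fibre,
so it suffices to show `B·F_e = 4`. Each summand `(m_i - 1)(B·F_i)` of `B·K_P = 2` is nonnegative,
and `B·F_i = B·F_e / m_i` is a positive even number, so any one summand is at least `2` and hence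
exactly `2`; this forces `m_i = 2` and `B·F_i = 2`, i.e. `B·F_e = 4`.
-/

section

variable {K M ι : Type*} [DivisionRing K] [AddCommGroup M] [Module K M]

theorem sub_one_smul_eq_of_smul_eq {m : K} (hm : m ≠ 0) {F E : M} (h : m • F = E) :
    (m - 1) • F = (1 - m⁻¹) • E := by
  rw [← h, smul_smul, sub_mul, one_mul, inv_mul_cancel₀ hm]

theorem sum_sub_one_smul_eq_of_smul_eq (s : Finset ι) {m : ι → K} (hm : ∀ i, m i ≠ 0)
    {F : ι → M} {E : M} (h : ∀ i, m i • F i = E) :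
    ∑ i ∈ s, (m i - 1) • F i = (∑ i ∈ s, (1 - (m i)⁻¹)) • E := by
  rw [Finset.sum_smul]
  exact Finset.sum_congr rfl fun i _ => sub_one_smul_eq_of_smul_eq (hm i) (h i)

end

theorem natCast_mul_eq_four_of_sub_one_mul_le_two {m : ℕ} (hm : 2 ≤ m) {b : ℚ}
    (heven : ∃ k : ℤ, b = 2 * k) (hb : 0 < b) (h : ((m : ℚ) - 1) * b ≤ 2) :
    (m : ℚ) * b = 4 := by
  obtain ⟨k, rfl⟩ := heven
  have hk_pos : (0 : ℤ) < k := by exact_mod_cast pos_of_mul_pos_right hb zero_le_two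
  have hk : (1 : ℚ) ≤ k := by exact_mod_cast hk_pos
  have hm' : (2 : ℚ) ≤ m := by exact_mod_cast hm
  have hk1 : (k : ℚ) = 1 := by nlinarith
  have hm2 : (m : ℚ) = 2 := by nlinarith
  rw [hk1, hm2]
  norm_num

theorem KP_is_half_fibre_general {M : Type*} [AddCommGroup M] [Module ℚ M]
    (n : ℕ) (Fe : M) (Fi : Fin n → M) (m : Fin n → ℕ)
    (hm : ∀ i, 2 ≤ m i)
    (hFi : ∀ i, (m i : ℚ) • Fi i = Fe)
    (B : M →ₗ[ℚ] ℚ)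
    (hK : B (∑ i, ((m i : ℚ) - 1) • Fi i) = 2)
    (heven : ∀ i, ∃ k : ℤ, B (Fi i) = 2 * k)
    (hpos : 0 < B Fe) :
    (∑ i, ((m i : ℚ) - 1) • Fi i) = (1 / 2 : ℚ) • Fe := by
  have hm1 (i) : (1 : ℚ) ≤ m i := by exact_mod_cast (one_le_two.trans (hm i))
  have hBFi (i) : (m i : ℚ) * B (Fi i) = B Fe := by simpa using congrArg B (hFi i)
  have hBFi_pos (i) : 0 < B (Fi i) :=
    pos_of_mul_pos_right ((hBFi i).symm ▸ hpos) (Nat.cast_nonneg _)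
  have hsum : ∑ i, ((m i : ℚ) - 1) * B (Fi i) = 2 := by simpa using hK
  obtain ⟨j, -, -⟩ := Finset.exists_ne_zero_of_sum_ne_zero (hsum ▸ two_ne_zero)
  have hle : ((m j : ℚ) - 1) * B (Fi j) ≤ 2 := hsum ▸ Finset.single_le_sum
    (fun i _ => mul_nonneg (sub_nonneg.2 (hm1 i)) (hBFi_pos i).le) (Finset.mem_univ j)
  have hFe : B Fe = 4 :=
    hBFi j ▸ natCast_mul_eq_four_of_sub_one_mul_le_two (hm j) (heven j) (hBFi_pos j) hle
  have hm0 (i) : (m i : ℚ) ≠ 0 := (zero_lt_one.trans_le (hm1 i)).ne'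
  rw [sum_sub_one_smul_eq_of_smul_eq _ hm0 hFi] at hK ⊢
  rw [map_smul, hFe, smul_eq_mul] at hK
  congr 1
  linarith

/-- Case 2: numerical classes on `P` with Kodaira dimension 1.  If
`K_P ≡ Σ(m_i − 1)F_i` with multiple fibres `m_iF_i` (so `m_i • F_i = F_e`
numerically, `m_i ≥ 2`), and an intersection functional `B` (intersection with
the effective divisor `B̄'`) satisfies `B·K_P = 2`, `B·F_i` even for all `i`,
`B·F_i ≥ 0` and `B·F_e > 0`, then `K_P` is numerically `½F_e`. -/
theorem KP_is_half_fibre {M : Type*} [AddCommGroup M] [Module ℚ M]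
    (n : ℕ) (Fe : M) (Fi : Fin n → M) (m : Fin n → ℕ)
    (hm : ∀ i, 2 ≤ m i)
    (hFi : ∀ i, (m i : ℚ) • Fi i = Fe)
    (B : M →ₗ[ℚ] ℚ)
    (hK : B (∑ i, ((m i : ℚ) - 1) • Fi i) = 2)
    (heven : ∀ i, ∃ k : ℤ, B (Fi i) = 2 * k)
    (hnonneg : ∀ i, 0 ≤ B (Fi i))
    (hpos : 0 < B Fe) :
    (∑ i, ((m i : ℚ) - 1) • Fi i) = (1 / 2 : ℚ) • Fe :=
  KP_is_half_fibre_general n Fe Fi m hm hFi B hK heven hpos
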